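/- arXiv:2106.00989 — 2 statements merged into one kernel-verified Lean document; each statement's English description precedes it below -/
import Mathlib

section
/- The formula ((φ,φ̄), W') ↦ φ·W' := φ((W'^⊥)^⊥) ∩ V defines an action of the group G(T,R) on the set X of subspaces of V that are E-commensurable of some index with W; i.e., for all (φ,φ̄), (ψ,ψ̄) ∈ G(T,R) and all W' ∈ X one has φ·W' ∈ X, id·W' = W', and (φ∘ψ)·W' = φ·(ψ·W'). -/
open Module Submodule

noncomputable section

abbrev TT : Type := (ℕ → ℂ) × (ℕ →₀ ℂ)
abbrev RR : Type := (ℕ →₀ ℂ) × (ℕ → ℂ)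

lemma lc_v_add (v w : ℕ → ℂ) (l : ℕ →₀ ℂ) :
    Finsupp.linearCombination ℂ (v + w) l
      = Finsupp.linearCombination ℂ v l + Finsupp.linearCombination ℂ w l := by
  classical
  simp only [Finsupp.linearCombination_apply]
  rw [← Finsupp.sum_add]
  exact Finsupp.sum_congr fun i _ => by simp [Pi.add_apply, smul_add, mul_add]

lemma lc_v_smul (c : ℂ) (v : ℕ → ℂ) (l : ℕ →₀ ℂ) :
    Finsupp.linearCombination ℂ (c • v) l = c • Finsupp.linearCombination ℂ v l := by
  classical
  simp only [Finsupp.linearCombination_apply, Finsupp.smul_sum]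
  exact Finsupp.sum_congr fun i _ => by simp [Pi.smul_apply, smul_comm, smul_eq_mul, mul_left_comm]

/-- The nondegenerate pairing `p : T × R → ℂ`,
`p((ω,u),(w,ν)) = Σ_i ω(i)w(i) + Σ_i u(i)ν(i)`. -/
def pairB : TT →ₗ[ℂ] RR →ₗ[ℂ] ℂ :=
  LinearMap.mk₂ ℂ
    (fun x y => Finsupp.linearCombination ℂ x.1 y.1 + Finsupp.linearCombination ℂ y.2 x.2)
    (fun x x' y => by
      simp only [Prod.fst_add, Prod.snd_add, lc_v_add, map_add]; ring)
    (fun c x y => by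
      simp only [Prod.smul_fst, Prod.smul_snd, lc_v_smul, map_smul, smul_add])
    (fun x y y' => by
      simp only [Prod.fst_add, Prod.snd_add, lc_v_add, map_add]; ring)
    (fun c x y => by
      simp only [Prod.smul_fst, Prod.smul_snd, lc_v_smul, map_smul, smul_add])

/-- The Mackey-group condition on a pair of automorphisms:
`p(φ x, y) = p(x, φ̄ y)` for all `x ∈ T`, `y ∈ R`. -/
def IsMackey (φ : TT ≃ₗ[ℂ] TT) (ψ : RR ≃ₗ[ℂ] RR) : Prop :=
  ∀ (x : TT) (y : RR), pairB (φ x) y = pairB x (ψ y)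

/-- `W^♯ = (ℕ→ℂ) × {0} ⊆ T`. -/
def Wsharp : Submodule ℂ TT := LinearMap.range (LinearMap.inl ℂ (ℕ → ℂ) (ℕ →₀ ℂ))

/-- `U^♯ = {0} × (ℕ→ℂ) ⊆ R`. -/
def Usharp : Submodule ℂ RR := LinearMap.range (LinearMap.inr ℂ (ℕ →₀ ℂ) (ℕ → ℂ))

/-- `V = (ℕ→₀ℂ) × (ℕ→₀ℂ) ⊆ T`. -/
def Vsub : Submodule ℂ TT :=
  LinearMap.range
    ((Finsupp.lcoeFun : (ℕ →₀ ℂ) →ₗ[ℂ] (ℕ → ℂ)).prodMap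
      (LinearMap.id : (ℕ →₀ ℂ) →ₗ[ℂ] (ℕ →₀ ℂ)))

/-- `W = (ℕ→₀ℂ) × {0} ⊆ T`. -/
def Wsub : Submodule ℂ TT :=
  LinearMap.range
    ((LinearMap.inl ℂ (ℕ → ℂ) (ℕ →₀ ℂ)).comp
      (Finsupp.lcoeFun : (ℕ →₀ ℂ) →ₗ[ℂ] (ℕ → ℂ)))

/-- `π_U : T → (ℕ→₀ℂ)`, the second projection. -/
def piU : TT →ₗ[ℂ] (ℕ →₀ ℂ) := LinearMap.snd ℂ (ℕ → ℂ) (ℕ →₀ ℂ)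

/-- `π_{W*} : R → (ℕ→₀ℂ)`, the first projection. -/
def piW : RR →ₗ[ℂ] (ℕ →₀ ℂ) := LinearMap.fst ℂ (ℕ →₀ ℂ) (ℕ → ℂ)

/-- The degree `d(φ) = dim π_U(φ(W^♯)) − dim π_U(φ^{-1}(W^♯))`. -/
def deg (φ : TT ≃ₗ[ℂ] TT) : ℤ :=
  (Module.finrank ℂ ((Wsharp.map φ.toLinearMap).map piU) : ℤ) -
    (Module.finrank ℂ ((Wsharp.map φ.symm.toLinearMap).map piU) : ℤ)

/-- `span {(δ_i, 0) : i ≥ n} ⊆ T`. -/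
def tailSpan (n : ℕ) : Submodule ℂ TT :=
  Submodule.span ℂ
    ((fun i => ((((Finsupp.single i (1 : ℂ)) : ℕ →₀ ℂ) : ℕ → ℂ), (0 : ℕ →₀ ℂ))) '' {i | n ≤ i})

/-- `W'` is E-commensurable of index `k` with `W`:
`W' = G ⊕ span{(δ_i,0) : i ≥ n}` with `G ⊆ V` finite-dimensional of dimension `n + k`. -/
def Ecomm (W' : Submodule ℂ TT) (k : ℤ) : Prop :=
  ∃ (n : ℕ) (G : Submodule ℂ TT), G ≤ Vsub ∧ FiniteDimensional ℂ G ∧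
    (Module.finrank ℂ G : ℤ) = (n : ℤ) + k ∧ Disjoint G (tailSpan n) ∧
    W' = G ⊔ tailSpan n

/-- `W'^⊥ = {y ∈ R : p(x,y) = 0 for all x ∈ W'}`. -/
def perpR (W' : Submodule ℂ TT) : Submodule ℂ RR :=
  ⨅ x ∈ (W' : Set TT), LinearMap.ker (pairB x)

/-- `Y^⊥ = {x ∈ T : p(x,y) = 0 for all y ∈ Y}`. -/
def perpT (Y : Submodule ℂ RR) : Submodule ℂ TT :=
  ⨅ y ∈ (Y : Set RR), LinearMap.ker (pairB.flip y)

/-- The action `φ·W' = φ((W'^⊥)^⊥) ∩ V`. -/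
def actOn (φ : TT ≃ₗ[ℂ] TT) (W' : Submodule ℂ TT) : Submodule ℂ TT :=
  ((perpT (perpR W')).map φ.toLinearMap) ⊓ Vsub

end

noncomputable section
open Module Submodule Finsupp

/-- basis function -/
def ee (j : ℕ) : ℕ → ℂ := ⇑(Finsupp.single j (1:ℂ))

def eT (j : ℕ) : TT := (ee j, 0)

lemma lc_ee {l : ℕ →₀ ℂ} {j : ℕ} : Finsupp.linearCombination ℂ (ee j) l = l j := by
  classical
  rw [Finsupp.linearCombination_apply]
  rw [Finsupp.sum_eq_single j (fun i _ hij => by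
    simp [ee, Finsupp.single_apply, Ne.symm hij]) (by simp)]
  simp [ee]

lemma lc_fun_zero (v : ℕ → ℂ) : Finsupp.linearCombination ℂ v (0 : ℕ →₀ ℂ) = 0 := map_zero _

lemma lc_zero_fun (l : ℕ →₀ ℂ) : Finsupp.linearCombination ℂ (0 : ℕ → ℂ) l = 0 := by
  rw [Finsupp.linearCombination_apply]
  exact Finset.sum_eq_zero fun i _ => by simp

/-- vanishing on the support kills the combination -/
lemma lc_eq_zero_of_vanish {v : ℕ → ℂ} {l : ℕ →₀ ℂ} (h : ∀ i ∈ l.support, v i = 0) :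
    Finsupp.linearCombination ℂ v l = 0 := by
  rw [Finsupp.linearCombination_apply]
  exact Finset.sum_eq_zero fun i hi => by simp only []; rw [h i hi, smul_zero]

lemma pairB_apply (x : TT) (y : RR) :
    pairB x y = Finsupp.linearCombination ℂ x.1 y.1 + Finsupp.linearCombination ℂ y.2 x.2 := rfl

lemma pairB_eT (i : ℕ) (y : RR) : pairB (eT i) y = y.1 i := by
  simp [pairB_apply, eT, lc_ee, lc_fun_zero]

lemma pairB_sing (x : TT) (j : ℕ) : pairB x ((Finsupp.single j (1:ℂ), 0) : RR) = x.1 j := by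
  simp [pairB_apply, Finsupp.linearCombination_single, lc_fun_zero]

lemma pairB_nu (x : TT) (ν : ℕ → ℂ) :
    pairB x ((0, ν) : RR) = Finsupp.linearCombination ℂ ν x.2 := by
  simp [pairB_apply, lc_fun_zero]

lemma pairB_eU (x : TT) (j : ℕ) : pairB x ((0, ee j) : RR) = x.2 j := by
  simp [pairB_nu, lc_ee]

end
noncomputable section
open Module Submodule

/-- `Sh n = {(ω,0) : ω_i = 0 for i < n}`. -/
def Sh (n : ℕ) : Submodule ℂ TT where
  carrier := {x | x.2 = 0 ∧ ∀ i, i < n → x.1 i = 0}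
  add_mem' := fun ha hb => ⟨by simp [ha.1, hb.1], fun i hi => by
    simp [Prod.fst_add, ha.2 i hi, hb.2 i hi]⟩
  zero_mem' := ⟨rfl, fun i _ => rfl⟩
  smul_mem' := fun c x hx => ⟨by simp [hx.1], fun i hi => by
    simp [Prod.smul_fst, hx.2 i hi]⟩

lemma mem_Sh {n : ℕ} {x : TT} : x ∈ Sh n ↔ x.2 = 0 ∧ ∀ i, i < n → x.1 i = 0 := Iff.rfl

lemma Sh_antitone {n m : ℕ} (h : n ≤ m) : Sh m ≤ Sh n :=
  fun x hx => ⟨hx.1, fun i hi => hx.2 i (lt_of_lt_of_le hi h)⟩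

/-- `D m = {x : x.1 i = 0 for i ≥ m}`. -/
def Dsub (m : ℕ) : Submodule ℂ TT where
  carrier := {x | ∀ i, m ≤ i → x.1 i = 0}
  add_mem' := fun ha hb i hi => by simp [Prod.fst_add, ha i hi, hb i hi]
  zero_mem' := fun i _ => rfl
  smul_mem' := fun c x hx i hi => by simp [Prod.smul_fst, hx i hi]

lemma mem_Dsub {m : ℕ} {x : TT} : x ∈ Dsub m ↔ ∀ i, m ≤ i → x.1 i = 0 := Iff.rfl

/-- windows -/
def Wind (m : ℕ) : Submodule ℂ TT := Dsub m ⊓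
  { carrier := {x | ∀ i, m ≤ i → x.2 i = 0}
    add_mem' := fun ha hb i hi => by simp [Prod.snd_add, ha i hi, hb i hi]
    zero_mem' := fun i _ => rfl
    smul_mem' := fun c x hx i hi => by simp [Prod.smul_snd, hx i hi] }

lemma mem_Wind {m : ℕ} {x : TT} :
    x ∈ Wind m ↔ (∀ i, m ≤ i → x.1 i = 0) ∧ ∀ i, m ≤ i → x.2 i = 0 := Iff.rfl

lemma Wind_mono {n m : ℕ} (h : n ≤ m) : Wind n ≤ Wind m :=
  fun x hx => ⟨fun i hi => hx.1 i (le_trans h hi), fun i hi => hx.2 i (le_trans h hi)⟩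

lemma mem_Vsub {x : TT} : x ∈ Vsub ↔ ∃ b : ℕ →₀ ℂ, ⇑b = x.1 := by
  constructor
  · rintro ⟨⟨b, v⟩, rfl⟩; exact ⟨b, rfl⟩
  · rintro ⟨b, hb⟩; exact ⟨(b, x.2), Prod.ext hb rfl⟩

lemma eT_mem_Vsub (i : ℕ) : eT i ∈ Vsub := mem_Vsub.mpr ⟨Finsupp.single i 1, rfl⟩

/-- an element of V lies in some window -/
lemma exists_wind_of_mem_Vsub {z : TT} (hz : z ∈ Vsub) : ∃ m, z ∈ Wind m := by
  obtain ⟨b, hb⟩ := mem_Vsub.mp hz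
  refine ⟨max (b.support.sup id) (z.2.support.sup id) + 1, fun i hi => ?_, fun i hi => ?_⟩
  · rw [← hb]
    by_contra h
    have := Finset.le_sup (f := id) (Finsupp.mem_support_iff.mpr h)
    simp only [id] at this
    omega
  · by_contra h
    have := Finset.le_sup (f := id) (Finsupp.mem_support_iff.mpr h)
    simp only [id] at this
    omega

/-- choose a common window for a finite set -/
lemma finset_wind (s : Finset TT) (h : ∀ z ∈ s, ∃ m, z ∈ Wind m) :
    ∃ m, ∀ z ∈ s, z ∈ Wind m := by
  classical
  induction s using Finset.induction with
  | empty => exact ⟨0, by simp⟩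
  | @insert a s' ha ih =>
    obtain ⟨m1, hm1⟩ := ih (fun z hz => h z (Finset.mem_insert_of_mem hz))
    obtain ⟨m2, hm2⟩ := h a (Finset.mem_insert_self a s')
    refine ⟨max m1 m2, fun z hz => ?_⟩
    rcases Finset.mem_insert.mp hz with rfl | hz
    · exact Wind_mono (le_max_right _ _) hm2
    · exact Wind_mono (le_max_left _ _) (hm1 z hz)

/-- fin-dim subspaces of V lie in windows -/
lemma exists_wind_of_le_Vsub {G : Submodule ℂ TT} (hG : G ≤ Vsub)
    (hfin : FiniteDimensional ℂ G) : ∃ m, G ≤ Wind m := by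
  obtain ⟨s, hs⟩ := (Module.Finite.iff_fg (N := G)).mp hfin
  obtain ⟨m, hm⟩ := finset_wind s (fun z hz =>
    exists_wind_of_mem_Vsub (hG (hs ▸ Submodule.subset_span hz)))
  exact ⟨m, hs ▸ Submodule.span_le.mpr fun z hz => hm z hz⟩

end
noncomputable section
open Module Submodule

/-- truncation: keep first component below `m`, the rest of the first component is dropped. -/
def tau (m : ℕ) : TT →ₗ[ℂ] TT where
  toFun x := (fun i => if i < m then x.1 i else 0, x.2)
  map_add' x y := by
    refine Prod.ext (funext fun i => ?_) rfl
    by_cases h : i < m <;> simp [h]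
  map_smul' c x := by
    refine Prod.ext (funext fun i => ?_) rfl
    by_cases h : i < m <;> simp [h]

lemma tau_mem_Vsub {x : TT} (hx : x ∈ Vsub) (m : ℕ) : tau m x ∈ Vsub := by
  classical
  refine mem_Vsub.mpr ⟨Finsupp.onFinset (Finset.range m)
    (fun i => if i < m then x.1 i else 0) (fun i hi => ?_), funext fun i => rfl⟩
  by_contra h
  simp only [Finset.mem_range, not_lt] at h
  exact hi (if_neg (by omega))

lemma tau_mem_Vsub' (x : TT) (m : ℕ) : tau m x ∈ Vsub := by
  classical
  refine mem_Vsub.mpr ⟨Finsupp.onFinset (Finset.range m)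
    (fun i => if i < m then x.1 i else 0) (fun i hi => ?_), funext fun i => rfl⟩
  by_contra h
  simp only [Finset.mem_range, not_lt] at h
  exact hi (if_neg (by omega))

lemma sub_tau_mem_Sh (x : TT) (m : ℕ) : x - tau m x ∈ Sh m := by
  refine ⟨by simp [tau], fun i hi => ?_⟩
  simp [tau, Prod.fst_sub, hi]

lemma tau_mem_Dsub (x : TT) (m : ℕ) : tau m x ∈ Dsub m := fun i hi => by
  simp [tau]; omega

lemma top_eq_Dsub_sup_Sh (m : ℕ) : (⊤ : Submodule ℂ TT) = Dsub m ⊔ Sh m := by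
  refine le_antisymm (fun x _ => ?_) le_top
  have : x = tau m x + (x - tau m x) := by abel
  rw [this]
  exact Submodule.add_mem_sup (tau_mem_Dsub x m) (sub_tau_mem_Sh x m)

lemma sup_Sh_eq_tau (F : Submodule ℂ TT) (m : ℕ) :
    F ⊔ Sh m = F.map (tau m) ⊔ Sh m := by
  refine le_antisymm (sup_le (fun x hx => ?_) le_sup_right)
    (sup_le (fun x hx => ?_) le_sup_right)
  · have : x = tau m x + (x - tau m x) := by abel
    rw [this]
    exact Submodule.add_mem_sup (Submodule.mem_map_of_mem hx) (sub_tau_mem_Sh x m)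
  · obtain ⟨z, hz, rfl⟩ := hx
    have : tau m z = z - (z - tau m z) := by abel
    rw [this]
    exact Submodule.sub_mem _ (Submodule.mem_sup_left hz)
      (Submodule.mem_sup_right (sub_tau_mem_Sh z m))

/-- the span of `eT i`, `n ≤ i < m` -/
def spanIco (n m : ℕ) : Submodule ℂ TT := Submodule.span ℂ (eT '' {i | n ≤ i ∧ i < m})

lemma spanIco_fin (n m : ℕ) : FiniteDimensional ℂ (spanIco n m) :=
  FiniteDimensional.span_of_finite ℂ (Set.Finite.image _ (Set.finite_Ico n m))

lemma spanIco_le_Vsub (n m : ℕ) : spanIco n m ≤ Vsub := by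
  refine Submodule.span_le.mpr ?_
  rintro x ⟨i, _, rfl⟩
  exact eT_mem_Vsub i

lemma eT_mem_Sh {n i : ℕ} (h : n ≤ i) : eT i ∈ Sh n := by
  refine ⟨rfl, fun j hj => ?_⟩
  simp only [eT, ee]
  rw [Finsupp.single_apply, if_neg (by omega)]

lemma spanIco_le_Sh (n m : ℕ) : spanIco n m ≤ Sh n := by
  refine Submodule.span_le.mpr ?_
  rintro x ⟨i, hi, rfl⟩
  exact eT_mem_Sh hi.1

/-- key sum computation -/
lemma sum_eT_eval (ω : ℕ → ℂ) (s : Finset ℕ) (j : ℕ) :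
    (∑ i ∈ s, ω i • eT i).1 j = if j ∈ s then ω j else 0 := by
  classical
  rw [Prod.fst_sum, Finset.sum_apply]
  have : ∀ i ∈ s, (ω i • eT i).1 j = if i = j then ω i else 0 := by
    intro i _
    simp only [Prod.smul_fst, eT, Pi.smul_apply, ee, smul_eq_mul]
    rw [Finsupp.single_apply]
    by_cases h : i = j <;> simp [h]
  rw [Finset.sum_congr rfl this, Finset.sum_ite_eq' s j (fun i => ω i)]

lemma sum_eT_snd (ω : ℕ → ℂ) (s : Finset ℕ) : (∑ i ∈ s, ω i • eT i).2 = 0 := by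
  classical
  rw [Prod.snd_sum]
  exact Finset.sum_eq_zero fun i _ => by simp [eT]

/-- `Sh n = spanIco n m ⊔ Sh m` for `n ≤ m` -/
lemma Sh_split {n m : ℕ} (h : n ≤ m) : Sh n = spanIco n m ⊔ Sh m := by
  classical
  refine le_antisymm (fun x hx => ?_) (sup_le (spanIco_le_Sh n m) (Sh_antitone h))
  set mid : TT := ∑ i ∈ Finset.Ico n m, x.1 i • eT i with hmid
  have hmem : mid ∈ spanIco n m := by
    refine Submodule.sum_mem _ fun i hi => Submodule.smul_mem _ _ (Submodule.subset_span ?_)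
    exact ⟨i, by simpa using (Finset.mem_Ico.mp hi), rfl⟩
  have : x = mid + (x - mid) := by abel
  rw [this]
  refine Submodule.add_mem_sup hmem ?_
  refine ⟨?_, fun j hj => ?_⟩
  · simp only [Prod.snd_sub, hx.1, hmid, sum_eT_snd, sub_zero]
  · simp only [Prod.fst_sub, Pi.sub_apply, hmid, sum_eT_eval]
    by_cases hjn : j < n
    · rw [hx.2 j hjn, if_neg (by simp [Finset.mem_Ico]; omega)]; ring
    · rw [if_pos (by simp [Finset.mem_Ico]; omega)]; ring

/-- `Sh n ⊓ Dsub m ≤ spanIco n m` -/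
lemma Sh_inf_Dsub_le (n m : ℕ) : Sh n ⊓ Dsub m ≤ spanIco n m := by
  classical
  rintro x ⟨hs, hd⟩
  set mid : TT := ∑ i ∈ Finset.Ico n m, x.1 i • eT i with hmid
  have hmem : mid ∈ spanIco n m := by
    refine Submodule.sum_mem _ fun i hi => Submodule.smul_mem _ _ (Submodule.subset_span ?_)
    exact ⟨i, by simpa using (Finset.mem_Ico.mp hi), rfl⟩
  have : x = mid := by
    refine Prod.ext (funext fun j => ?_) (by rw [hmid, sum_eT_snd, hs.1])
    rw [hmid, sum_eT_eval]
    by_cases h1 : j < n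
    · rw [hs.2 j h1, if_neg (by simp [Finset.mem_Ico]; omega)]
    · by_cases h2 : j < m
      · rw [if_pos (by simp [Finset.mem_Ico]; omega)]
      · rw [hd j (by omega), if_neg (by simp [Finset.mem_Ico]; omega)]
  rw [this]; exact hmem

/-- `tailSpan n ≤ Sh n` -/
lemma tailSpan_le_Sh (n : ℕ) : tailSpan n ≤ Sh n := by
  refine Submodule.span_le.mpr ?_
  rintro x ⟨i, hi, rfl⟩
  exact eT_mem_Sh hi

lemma tailSpan_le_Vsub (n : ℕ) : tailSpan n ≤ Vsub := by
  refine Submodule.span_le.mpr ?_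
  rintro x ⟨i, _, rfl⟩
  exact eT_mem_Vsub i

/-- `Sh n ⊓ V = tailSpan n` -/
lemma Sh_inf_Vsub (n : ℕ) : Sh n ⊓ Vsub = tailSpan n := by
  classical
  refine le_antisymm ?_ (le_inf (tailSpan_le_Sh n) (tailSpan_le_Vsub n))
  rintro x ⟨hs, hv⟩
  obtain ⟨b, hb⟩ := mem_Vsub.mp hv
  have : x = ∑ i ∈ b.support, x.1 i • eT i := by
    refine Prod.ext (funext fun j => ?_) (by rw [sum_eT_snd, hs.1])
    rw [sum_eT_eval]
    by_cases h : j ∈ b.support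
    · rw [if_pos h]
    · rw [if_neg h, ← hb]
      exact Finsupp.notMem_support_iff.mp h
  rw [this]
  refine Submodule.sum_mem _ fun i hi => Submodule.smul_mem _ _ (Submodule.subset_span ?_)
  refine ⟨i, ?_, rfl⟩
  show n ≤ i
  by_contra hlt
  have := hs.2 i (by omega)
  rw [← hb] at this
  exact Finsupp.mem_support_iff.mp hi this

end
noncomputable section
open Module Submodule

lemma mem_perpR {A : Submodule ℂ TT} {y : RR} :
    y ∈ perpR A ↔ ∀ x ∈ A, pairB x y = 0 := by
  simp [perpR, Submodule.mem_iInf, LinearMap.mem_ker]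

lemma mem_perpT {Y : Submodule ℂ RR} {x : TT} :
    x ∈ perpT Y ↔ ∀ y ∈ Y, pairB x y = 0 := by
  simp [perpT, Submodule.mem_iInf, LinearMap.mem_ker, LinearMap.flip_apply]

lemma le_double_perp (A : Submodule ℂ TT) : A ≤ perpT (perpR A) :=
  fun x hx => mem_perpT.mpr fun y hy => mem_perpR.mp hy x hx

/-- elements of `perpR (G ⊔ tailSpan n)` have first component supported below `n`. -/
lemma perpR_tail_supp {G : Submodule ℂ TT} {n : ℕ} {y : RR}
    (hy : y ∈ perpR (G ⊔ tailSpan n)) : ∀ i, n ≤ i → y.1 i = 0 := by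
  intro i hi
  have : eT i ∈ G ⊔ tailSpan n :=
    Submodule.mem_sup_right (Submodule.subset_span ⟨i, hi, rfl⟩)
  have := mem_perpR.mp hy _ this
  rwa [pairB_eT] at this

/-- `Sh n` is killed by `perpR (G ⊔ tailSpan n)`. -/
lemma Sh_le_perpT {G : Submodule ℂ TT} {n : ℕ} :
    Sh n ≤ perpT (perpR (G ⊔ tailSpan n)) := by
  intro x hx
  refine mem_perpT.mpr fun y hy => ?_
  rw [pairB_apply, hx.1, map_zero, add_zero]
  refine lc_eq_zero_of_vanish fun i hi => ?_
  refine hx.2 i ?_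
  by_contra h
  exact Finsupp.mem_support_iff.mp hi (perpR_tail_supp hy i (by omega))

/-- Functional represented by a pairing element on a window. -/
lemma exists_rep (f : TT →ₗ[ℂ] ℂ) (m : ℕ) :
    ∃ y : RR, (∀ i, m ≤ i → y.1 i = 0) ∧
      ∀ x : TT, (∀ i, m ≤ i → x.1 i = 0) → pairB x y = f x := by
  classical
  refine ⟨(∑ i ∈ Finset.range m, Finsupp.single i (f (eT i)), fun i => f (0, Finsupp.single i 1)),
    ?_, ?_⟩
  · intro i hi
    rw [Finset.sum_apply' i]
    refine Finset.sum_eq_zero fun j hj => Finsupp.single_apply_eq_zero.mpr fun h => ?_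
    exact absurd (h ▸ Finset.mem_range.mp hj) (by omega)
  · intro x hx
    rw [pairB_apply]
    have h1 : Finsupp.linearCombination ℂ x.1 (∑ i ∈ Finset.range m, Finsupp.single i (f (eT i)))
        = f (x.1, 0) := by
      rw [map_sum]
      have : ∀ i ∈ Finset.range m,
          Finsupp.linearCombination ℂ x.1 (Finsupp.single i (f (eT i))) = x.1 i • f (eT i) := by
        intro i _
        rw [Finsupp.linearCombination_single]
        simp [mul_comm]
      rw [Finset.sum_congr rfl this]
      have hxe : (x.1, (0:ℕ →₀ ℂ)) = ∑ i ∈ Finset.range m, x.1 i • eT i := by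
        refine Prod.ext (funext fun j => ?_) (by rw [sum_eT_snd])
        rw [sum_eT_eval]
        by_cases h : j ∈ Finset.range m
        · rw [if_pos h]
        · rw [if_neg h, hx j (by simpa using h)]
      rw [hxe, map_sum]
      exact Finset.sum_congr rfl fun i _ => by simp
    have h2 : Finsupp.linearCombination ℂ (fun i => f (0, Finsupp.single i 1)) x.2
        = f (0, x.2) := by
      rw [Finsupp.linearCombination_apply]
      have hxu : ((0:ℕ→ℂ), x.2) = x.2.sum fun i c => c • ((0:ℕ→ℂ), Finsupp.single i 1) := by
        refine Prod.ext ?_ ?_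
        · rw [Finsupp.sum, Prod.fst_sum]
          exact (Finset.sum_eq_zero fun i _ => by simp).symm
        · rw [Finsupp.sum, Prod.snd_sum]
          have : ∀ i ∈ x.2.support, (x.2 i • ((0:ℕ→ℂ), Finsupp.single i (1:ℂ))).2
              = Finsupp.single i (x.2 i) := by
            intro i _
            rw [Prod.smul_snd, Finsupp.smul_single, smul_eq_mul, mul_one]
          rw [Finset.sum_congr rfl this]
          exact (Finsupp.sum_single x.2).symm
      rw [hxu, map_finsuppSum]
      refine Finsupp.sum_congr fun i _ => ?_
      have he : ((0:ℕ→ℂ), Finsupp.single i (x.2 i)) = x.2 i • ((0:ℕ→ℂ), Finsupp.single i (1:ℂ)) :=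
        Prod.ext (by simp) (by simp)
      simp only [map_smul]
      all_goals simp [he]
    rw [h1, h2]
    have : x = (x.1, (0:ℕ→₀ℂ)) + ((0:ℕ→ℂ), x.2) := by
      refine Prod.ext (by simp) (by simp)
    conv_rhs => rw [this]
    rw [map_add]

/-- CORE: double perp of an E-commensurable subspace. -/
lemma core_le {G : Submodule ℂ TT} {n : ℕ} (hG : G ≤ Vsub) (hfin : FiniteDimensional ℂ G) :
    perpT (perpR (G ⊔ tailSpan n)) ≤ G ⊔ Sh n := by
  classical
  obtain ⟨mG, hmG⟩ := exists_wind_of_le_Vsub hG hfin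
  intro x hx
  set m := max (max n mG) (x.2.support.sup id + 1) with hm
  have hnm : n ≤ m := le_trans (le_max_left _ _) (le_max_left _ _)
  -- split x
  have hsplit : x = tau m x + (x - tau m x) := by abel
  have hhi : x - tau m x ∈ Sh n := Sh_antitone hnm (sub_tau_mem_Sh x m)
  -- the truncated part is still in the double perp
  have hx0 : tau m x ∈ perpT (perpR (G ⊔ tailSpan n)) := by
    have : tau m x = x - (x - tau m x) := by abel
    rw [this]
    exact Submodule.sub_mem _ hx (Sh_le_perpT (Sh_antitone hnm (sub_tau_mem_Sh x m)))
  -- suffices to show the truncated part is in `G ⊔ tailSpan n`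
  suffices h : tau m x ∈ G ⊔ tailSpan n by
    rw [hsplit]
    exact Submodule.add_mem _ (sup_le_sup_left (tailSpan_le_Sh n) G h)
      (Submodule.mem_sup_right hhi)
  by_contra hnot
  -- separating functional
  set S : Submodule ℂ TT := G ⊔ spanIco n m with hS
  have hle : S ≤ G ⊔ tailSpan n := by
    refine sup_le le_sup_left ?_
    refine le_trans ?_ le_sup_right
    refine Submodule.span_le.mpr ?_
    rintro z ⟨i, hi, rfl⟩
    exact Submodule.subset_span ⟨i, hi.1, rfl⟩
  have hxS : tau m x ∉ S := fun hmem => hnot (hle hmem)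
  have hq : S.mkQ (tau m x) ≠ 0 := by
    rw [Submodule.mkQ_apply, Ne, Submodule.Quotient.mk_eq_zero]
    exact hxS
  obtain ⟨g, hg⟩ : ∃ g : Module.Dual ℂ (TT ⧸ S), g (S.mkQ (tau m x)) ≠ 0 := by
    by_contra hall
    push_neg at hall
    exact hq ((Module.forall_dual_apply_eq_zero_iff ℂ _).mp hall)
  set f : TT →ₗ[ℂ] ℂ := g ∘ₗ S.mkQ with hf
  have hfS : ∀ z ∈ S, f z = 0 := by
    intro z hz
    have : S.mkQ z = 0 := by
      rw [Submodule.mkQ_apply, Submodule.Quotient.mk_eq_zero]; exact hz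
    simp [hf, this]
  obtain ⟨y, hy1, hy2⟩ := exists_rep f m
  -- y kills G ⊔ tailSpan n
  have hyperp : y ∈ perpR (G ⊔ tailSpan n) := by
    refine mem_perpR.mpr fun z hz => ?_
    have hker : G ⊔ tailSpan n ≤ LinearMap.ker (pairB.flip y) := by
      refine sup_le (fun w hw => ?_) (Submodule.span_le.mpr ?_)
      · rw [LinearMap.mem_ker, LinearMap.flip_apply]
        rw [hy2 w (fun i hi => (hmG hw).1 i (le_trans (le_trans (le_max_right n mG) (le_max_left _ _)) hi))]
        exact hfS w (Submodule.mem_sup_left hw)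
      · rintro w ⟨i, hi, rfl⟩
        rw [SetLike.mem_coe, LinearMap.mem_ker, LinearMap.flip_apply]
        show pairB (eT i) y = 0
        by_cases him : i < m
        · rw [hy2 (eT i) ?hsupp]
          case hsupp =>
            intro j hj
            simp only [eT, ee]
            rw [Finsupp.single_apply, if_neg (by omega)]
          exact hfS _ (Submodule.mem_sup_right (Submodule.subset_span ⟨i, ⟨hi, him⟩, rfl⟩))
        · rw [pairB_eT]
          exact hy1 i (by omega)
    exact LinearMap.mem_ker.mp (hker hz)
  -- contradiction
  have hzero := mem_perpT.mp hx0 y hyperp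
  rw [hy2 (tau m x) (fun i hi => by simp only [tau, LinearMap.coe_mk, AddHom.coe_mk]; rw [if_neg (by omega)])] at hzero
  exact hg hzero

/-- D1 : the closure of an E-commensurable subspace. -/
lemma closure_eq {G : Submodule ℂ TT} {n : ℕ} (hG : G ≤ Vsub) (hfin : FiniteDimensional ℂ G) :
    perpT (perpR (G ⊔ tailSpan n)) = G ⊔ Sh n := by
  refine le_antisymm (core_le hG hfin) (sup_le ?_ Sh_le_perpT)
  exact le_trans le_sup_left (le_double_perp _)

/-- D1' : recovering `W'` from its closure. -/
lemma closure_inf_Vsub {G : Submodule ℂ TT} {n : ℕ} (hG : G ≤ Vsub)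
    (hfin : FiniteDimensional ℂ G) :
    perpT (perpR (G ⊔ tailSpan n)) ⊓ Vsub = G ⊔ tailSpan n := by
  rw [closure_eq hG hfin, sup_inf_assoc_of_le _ hG, Sh_inf_Vsub]

end
noncomputable section
open Module Submodule Polynomial

instance : Uncountable ℂ := Complex.ofReal_injective.uncountable

/-- KEY LEMMA: a family of finitely supported vectors whose pairings with every
`ν : ℕ → ℂ` are supported on finitely many indices is eventually zero. -/
lemma key_lemma (u : ℕ → (ℕ →₀ ℂ))
    (h : ∀ ν : ℕ → ℂ, {j | Finsupp.linearCombination ℂ ν (u j) ≠ 0}.Finite) :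
    {j | u j ≠ 0}.Finite := by
  classical
  set P : ℕ → Polynomial ℂ := fun j => (u j).sum fun i c => Polynomial.C c * Polynomial.X ^ i
    with hP
  have hcoeff : ∀ j i, (P j).coeff i = u j i := by
    intro j i
    rw [hP]
    simp only [Finsupp.sum]
    rw [Polynomial.finset_sum_coeff]
    have : ∀ k ∈ (u j).support, (Polynomial.C (u j k) * Polynomial.X ^ k).coeff i
        = if k = i then u j k else 0 := by
      intro k _
      rw [Polynomial.coeff_C_mul, Polynomial.coeff_X_pow]
      rcases eq_or_ne k i with hk | hk
      · simp [hk]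
      · simp [hk, (Ne.symm hk : ¬ i = k)]
    rw [Finset.sum_congr rfl this, Finset.sum_ite_eq' (u j).support i (fun k => u j k)]
    by_cases hi : i ∈ (u j).support
    · rw [if_pos hi]
    · rw [if_neg hi]; exact (Finsupp.notMem_support_iff.mp hi).symm
  have hPne : ∀ j, u j ≠ 0 → P j ≠ 0 := by
    intro j hj hzero
    refine hj (Finsupp.ext fun i => ?_)
    rw [← hcoeff j i, hzero]; rfl
  have heval : ∀ j (z : ℂ), (P j).eval z = Finsupp.linearCombination ℂ (fun i => z ^ i) (u j) := by
    intro j z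
    rw [hP, Finsupp.linearCombination_apply]
    simp only [Finsupp.sum]
    rw [Polynomial.eval_finset_sum]
    exact Finset.sum_congr rfl fun i _ => by simp
  set Sroots : Set ℂ := ⋃ j : ℕ, {z : ℂ | u j ≠ 0 ∧ (P j).IsRoot z} with hS
  have hSc : Sroots.Countable := by
    refine Set.countable_iUnion fun j => ?_
    by_cases hj : u j = 0
    · have : {z : ℂ | u j ≠ 0 ∧ (P j).IsRoot z} = ∅ := by
        ext z; simp [hj]
      rw [this]; exact Set.countable_empty
    · refine Set.Finite.countable ?_
      refine Set.Finite.subset (Polynomial.finite_setOf_isRoot (hPne j hj)) ?_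
      intro z hz; exact hz.2
  obtain ⟨z, hz⟩ : ∃ z : ℂ, z ∉ Sroots := by
    by_contra hall
    push_neg at hall
    have : Sroots = Set.univ := Set.eq_univ_of_forall hall
    rw [this] at hSc
    exact not_countable (Set.countable_univ_iff.mp hSc)
  refine Set.Finite.subset (h (fun i => z ^ i)) ?_
  intro j hj
  show Finsupp.linearCombination ℂ (fun i => z ^ i) (u j) ≠ 0
  rw [← heval j z]
  intro hzero
  exact hz (Set.mem_iUnion.mpr ⟨j, hj, hzero⟩)

/-- eventual-zero extraction -/
lemma exists_bound_of_finite {p : ℕ → Prop} (h : {j | p j}.Finite) :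
    ∃ m, ∀ j, m ≤ j → ¬ p j := by
  obtain ⟨b, hb⟩ := h.bddAbove
  exact ⟨b + 1, fun j hj hp => by have := hb hp; omega⟩

section Mackey
variable {φ : TT ≃ₗ[ℂ] TT} {ψ : RR ≃ₗ[ℂ] RR}

lemma isMackey_symm (h : IsMackey φ ψ) : IsMackey φ.symm ψ.symm := by
  intro x y
  have := h (φ.symm x) (ψ.symm y)
  rwa [φ.apply_symm_apply, ψ.apply_symm_apply, eq_comm] at this

/-- representation of the first component of `ψ (0, ν)`. -/
lemma rep1 (h : IsMackey φ ψ) (ν : ℕ → ℂ) (j : ℕ) :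
    (ψ (0, ν)).1 j = Finsupp.linearCombination ℂ ν (φ (eT j)).2 := by
  have := h (eT j) (0, ν)
  rwa [pairB_nu, pairB_eT, eq_comm] at this

lemma fin1 (h : IsMackey φ ψ) : {j | (φ (eT j)).2 ≠ 0}.Finite := by
  refine key_lemma (fun j => (φ (eT j)).2) fun ν => ?_
  have : {j | Finsupp.linearCombination ℂ ν (φ (eT j)).2 ≠ 0}
      ⊆ ((ψ (0, ν)).1.support : Set ℕ) := by
    intro j hj
    rw [Finset.mem_coe, Finsupp.mem_support_iff, rep1 h]
    exact hj
  exact Set.Finite.subset (Finset.finite_toSet _) this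

/-- bound for `ψ (0, ν)` first components -/
lemma bound1 (h : IsMackey φ ψ) : ∃ m, ∀ (ν : ℕ → ℂ) (j : ℕ), m ≤ j → (ψ (0, ν)).1 j = 0 := by
  obtain ⟨m, hm⟩ := exists_bound_of_finite (fin1 h)
  refine ⟨m, fun ν j hj => ?_⟩
  rw [rep1 h]
  have : (φ (eT j)).2 = 0 := by
    by_contra hne
    exact hm j hj hne
  rw [this, map_zero]

/-- step 2: `φ` maps deep `Sh` into `W^♯ = Sh 0`. -/
lemma Bvanish (h : IsMackey φ ψ) {m1 : ℕ}
    (hm1 : ∀ (ν : ℕ → ℂ) (j : ℕ), m1 ≤ j → (ψ (0, ν)).1 j = 0) :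
    ∀ x ∈ Sh m1, (φ x).2 = 0 := by
  intro x hx
  ext j
  have h1 : (φ x).2 j = pairB (φ x) (0, ee j) := (pairB_eU _ j).symm
  rw [h1, h x (0, ee j), pairB_apply, hx.1, map_zero, add_zero]
  refine lc_eq_zero_of_vanish fun i hi => ?_
  refine hx.2 i ?_
  by_contra hge
  exact Finsupp.mem_support_iff.mp hi (hm1 (ee j) i (by omega))

end Mackey
end
noncomputable section
open Module Submodule

variable {φ : TT ≃ₗ[ℂ] TT} {ψ : RR ≃ₗ[ℂ] RR}

/-- Structure theorem: a Mackey automorphism maps `Sh n` onto `F ⊔ Sh m`. -/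
lemma mackey_map_Sh (h : IsMackey φ ψ) (n : ℕ) :
    ∃ (m : ℕ) (F : Submodule ℂ TT), FiniteDimensional ℂ F ∧
      (Sh n).map φ.toLinearMap = F ⊔ Sh m := by
  classical
  obtain ⟨m1, hm1⟩ := bound1 h
  set m' := max n m1 with hm'
  have hB : ∀ x ∈ Sh m', (φ x).2 = 0 := fun x hx =>
    Bvanish h hm1 x (Sh_antitone (le_max_right _ _) hx)
  have hsymm := isMackey_symm h
  obtain ⟨m2, hm2⟩ := bound1 hsymm
  set m3 := (Finset.range m').sup
    (fun j => ((ψ.symm ((Finsupp.single j (1:ℂ)), (0:ℕ→ℂ))).1.support.sup id) + 1) with hm3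
  have hm3' : ∀ j, j < m' → ∀ i, m3 ≤ i → (ψ.symm ((Finsupp.single j (1:ℂ)), 0)).1 i = 0 := by
    intro j hj i hi
    by_contra hne
    have h1 := Finset.le_sup (f := id) (Finsupp.mem_support_iff.mpr hne)
    have h2 : ((ψ.symm ((Finsupp.single j (1:ℂ)), (0:ℕ→ℂ))).1.support.sup id) + 1 ≤ m3 :=
      Finset.le_sup (f := fun j =>
        ((ψ.symm ((Finsupp.single j (1:ℂ)), (0:ℕ→ℂ))).1.support.sup id) + 1)
      (Finset.mem_range.mpr hj)
    simp only [id] at h1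
    omega
  set m'' := max m2 m3 with hm''
  -- step 4 : Sh m'' ≤ φ (Sh m')
  have hstep4 : Sh m'' ≤ (Sh m').map φ.toLinearMap := by
    intro x hx
    refine ⟨φ.symm x, ?_, φ.apply_symm_apply x⟩
    have hz2 : (φ.symm x).2 = 0 := by
      ext j
      have h1 : (φ.symm x).2 j = pairB (φ.symm x) (0, ee j) := (pairB_eU _ j).symm
      rw [h1, hsymm x (0, ee j), pairB_apply, hx.1, map_zero, add_zero]
      refine lc_eq_zero_of_vanish fun i hi => ?_
      refine hx.2 i ?_
      have : i < m2 := by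
        by_contra hge
        exact Finsupp.mem_support_iff.mp hi (hm2 (ee j) i (by omega))
      omega
    refine ⟨hz2, fun j hj => ?_⟩
    have h1 : (φ.symm x).1 j = pairB (φ.symm x) ((Finsupp.single j (1:ℂ)), 0) :=
      (pairB_sing _ j).symm
    rw [h1, hsymm x _, pairB_apply, hx.1, map_zero, add_zero]
    refine lc_eq_zero_of_vanish fun i hi => ?_
    refine hx.2 i ?_
    have : i < m3 := by
      by_contra hge
      exact Finsupp.mem_support_iff.mp hi (hm3' j hj i (by omega))
    omega
  set Z' := (Sh m').map φ.toLinearMap with hZ'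
  have hZSh0 : Z' ≤ Sh 0 := by
    rintro _ ⟨x, hx, rfl⟩
    exact ⟨hB x hx, fun i hi => absurd hi (by omega)⟩
  have hmod : Z' = (Dsub m'' ⊓ Z') ⊔ Sh m'' := by
    have h1 : (Sh m'' ⊔ Dsub m'') ⊓ Z' = Sh m'' ⊔ (Dsub m'' ⊓ Z') :=
      sup_inf_assoc_of_le _ hstep4
    have h2 : Sh m'' ⊔ Dsub m'' = ⊤ := by rw [sup_comm, ← top_eq_Dsub_sup_Sh]
    rw [h2, top_inf_eq] at h1
    conv_lhs => rw [h1]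
    exact sup_comm _ _
  have hfinF0 : FiniteDimensional ℂ (Dsub m'' ⊓ Z' : Submodule ℂ TT) := by
    have hle : Dsub m'' ⊓ Z' ≤ spanIco 0 m'' := by
      refine le_trans ?_ (Sh_inf_Dsub_le 0 m'')
      exact fun x hx => ⟨hZSh0 hx.2, hx.1⟩
    have := spanIco_fin 0 m''
    exact Submodule.finiteDimensional_of_le hle
  have hsplit : Sh n = spanIco n m' ⊔ Sh m' := Sh_split (le_max_left _ _)
  refine ⟨m'', (spanIco n m').map φ.toLinearMap ⊔ (Dsub m'' ⊓ Z'), ?_, ?_⟩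
  · have h1 : FiniteDimensional ℂ ((spanIco n m').map φ.toLinearMap) := by
      have := spanIco_fin n m'
      exact Module.Finite.map _ _
    exact Submodule.finiteDimensional_sup _ _
  · rw [hsplit, Submodule.map_sup, ← hZ']
    conv_lhs => rw [hmod]
    rw [sup_assoc]

/-- A Mackey automorphism maps closures of E-commensurable spaces to closures of
E-commensurable spaces. -/
lemma mackey_map_closure (h : IsMackey φ ψ) {G : Submodule ℂ TT} (n : ℕ)
    (hfin : FiniteDimensional ℂ G) :
    ∃ (m : ℕ) (G' : Submodule ℂ TT), G' ≤ Vsub ∧ FiniteDimensional ℂ G' ∧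
      (G ⊔ Sh n).map φ.toLinearMap = G' ⊔ Sh m := by
  obtain ⟨m, F, hF, hmap⟩ := mackey_map_Sh h n
  refine ⟨m, (G.map φ.toLinearMap ⊔ F).map (tau m), ?_, ?_, ?_⟩
  · rintro _ ⟨z, _, rfl⟩
    exact tau_mem_Vsub' z m
  · have h1 : FiniteDimensional ℂ (G.map φ.toLinearMap) := Module.Finite.map _ _
    have h2 : FiniteDimensional ℂ (G.map φ.toLinearMap ⊔ F : Submodule ℂ TT) :=
      Submodule.finiteDimensional_sup _ _
    exact Module.Finite.map _ _
  · rw [Submodule.map_sup, hmap, ← sup_assoc, sup_Sh_eq_tau]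

end
noncomputable section
set_option maxHeartbeats 1000000
set_option synthInstance.maxHeartbeats 400000
open Module Submodule

/-- general complement helper (stated over an abstract space to avoid instance issues) -/
lemma compl_inside {V : Type*} [AddCommGroup V] [Module ℂ V] (A B : Submodule ℂ V)
    (hfin : FiniteDimensional ℂ A) :
    ∃ C : Submodule ℂ V, C ≤ A ∧ FiniteDimensional ℂ C ∧ Disjoint C B ∧ (A ⊓ B) ⊔ C = A := by
  classical
  set p := (A ⊓ B).comap A.subtype with hp
  obtain ⟨q, hq⟩ := Submodule.exists_isCompl p
  refine ⟨q.map A.subtype, Submodule.map_subtype_le (p := A) q, Module.Finite.map _ _, ?_, ?_⟩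
  · rw [disjoint_iff, eq_bot_iff]
    rintro x ⟨hx1, hx2⟩
    obtain ⟨x1, hx1q, rfl⟩ := hx1
    have hxp : x1 ∈ p := by
      rw [hp, Submodule.mem_comap]
      exact ⟨x1.2, hx2⟩
    have hx0 : x1 ∈ p ⊓ q := ⟨hxp, hx1q⟩
    rw [hq.inf_eq_bot] at hx0
    rw [hx0]
    simp
  · have hmapp : p.map A.subtype = A ⊓ B := by
      rw [hp, Submodule.map_comap_subtype, ← inf_assoc, inf_idem]
    rw [← hmapp, ← Submodule.map_sup, hq.sup_eq_top, Submodule.map_subtype_top]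

/-- disjointification: a representation `G' ⊔ tailSpan m` can be made E-commensurable. -/
lemma ecomm_of_rep (G' : Submodule ℂ TT) (m : ℕ) (hV : G' ≤ Vsub)
    (hfin : FiniteDimensional ℂ G') : ∃ k, Ecomm (G' ⊔ tailSpan m) k := by
  obtain ⟨C, hle, hfinC, hdisj, hsplit⟩ := compl_inside G' (tailSpan m) hfin
  refine ⟨(Module.finrank ℂ C : ℤ) - m, ?_⟩
  unfold Ecomm
  refine ⟨m, C, le_trans hle hV, hfinC, by ring, hdisj, ?_⟩
  conv_lhs => rw [← hsplit]
  rw [sup_comm (G' ⊓ tailSpan m) C, sup_assoc]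
  congr 1
  exact sup_eq_right.mpr inf_le_right

/-- the action computed on an E-commensurable representation. -/
lemma actOn_eq {φ : TT ≃ₗ[ℂ] TT} {ψ : RR ≃ₗ[ℂ] RR} (h : IsMackey φ ψ)
    {G : Submodule ℂ TT} (n : ℕ) (hGV : G ≤ Vsub) (hfin : FiniteDimensional ℂ G) :
    ∃ (m : ℕ) (G' : Submodule ℂ TT), G' ≤ Vsub ∧ FiniteDimensional ℂ G' ∧
      (G ⊔ Sh n).map φ.toLinearMap = G' ⊔ Sh m ∧
      actOn φ (G ⊔ tailSpan n) = G' ⊔ tailSpan m := by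
  obtain ⟨m, G', hV', hfin', hmap⟩ := mackey_map_closure h n hfin
  refine ⟨m, G', hV', hfin', hmap, ?_⟩
  unfold actOn
  rw [closure_eq hGV hfin, hmap, sup_inf_assoc_of_le _ hV', Sh_inf_Vsub]

theorem stmt5' :
    (∀ (φ : TT ≃ₗ[ℂ] TT) (ψ : RR ≃ₗ[ℂ] RR), IsMackey φ ψ →
      ∀ W' : Submodule ℂ TT, (∃ k : ℤ, Ecomm W' k) → ∃ k : ℤ, Ecomm (actOn φ W') k) ∧
    (∀ W' : Submodule ℂ TT, (∃ k : ℤ, Ecomm W' k) →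
      actOn (LinearEquiv.refl ℂ TT) W' = W') ∧
    (∀ (φ₁ : TT ≃ₗ[ℂ] TT) (ψ₁ : RR ≃ₗ[ℂ] RR), IsMackey φ₁ ψ₁ →
      ∀ (φ₂ : TT ≃ₗ[ℂ] TT) (ψ₂ : RR ≃ₗ[ℂ] RR), IsMackey φ₂ ψ₂ →
      ∀ W' : Submodule ℂ TT, (∃ k : ℤ, Ecomm W' k) →
        actOn (φ₂.trans φ₁) W' = actOn φ₁ (actOn φ₂ W')) := by
  refine ⟨?_, ?_, ?_⟩
  · intro φ ψ h W' hW
    obtain ⟨k, hk⟩ := hW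
    unfold Ecomm at hk
    obtain ⟨n, G, hGV, hfin, hdim, hdisj, rfl⟩ := hk
    obtain ⟨m, G', hV', hfin', _, heq⟩ := actOn_eq h n hGV hfin
    rw [heq]
    exact ecomm_of_rep G' m hV' hfin'
  · intro W' hW
    obtain ⟨k, hk⟩ := hW
    unfold Ecomm at hk
    obtain ⟨n, G, hGV, hfin, hdim, hdisj, rfl⟩ := hk
    unfold actOn
    rw [show (LinearEquiv.refl ℂ TT).toLinearMap = LinearMap.id from rfl, Submodule.map_id]
    exact closure_inf_Vsub hGV hfin
  · intro φ₁ ψ₁ h₁ φ₂ ψ₂ h₂ W' hW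
    obtain ⟨k, hk⟩ := hW
    unfold Ecomm at hk
    obtain ⟨n, G, hGV, hfin, hdim, hdisj, rfl⟩ := hk
    obtain ⟨m, G', hV', hfin', hmap, heq⟩ := actOn_eq h₂ n hGV hfin
    rw [heq]
    unfold actOn
    rw [closure_eq hGV hfin, closure_eq hV' hfin']
    rw [show (φ₂.trans φ₁).toLinearMap = φ₁.toLinearMap.comp φ₂.toLinearMap from rfl]
    rw [Submodule.map_comp, hmap]

end

/-- The formula `(φ, W') ↦ φ((W'^⊥)^⊥) ∩ V` defines an action of `G(T,R)` on the set of
subspaces of `V` that are E-commensurable of some index with `W`. -/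
theorem stmt5 :
    (∀ (φ : TT ≃ₗ[ℂ] TT) (ψ : RR ≃ₗ[ℂ] RR), IsMackey φ ψ →
      ∀ W' : Submodule ℂ TT, (∃ k : ℤ, Ecomm W' k) → ∃ k : ℤ, Ecomm (actOn φ W') k) ∧
    (∀ W' : Submodule ℂ TT, (∃ k : ℤ, Ecomm W' k) →
      actOn (LinearEquiv.refl ℂ TT) W' = W') ∧
    (∀ (φ₁ : TT ≃ₗ[ℂ] TT) (ψ₁ : RR ≃ₗ[ℂ] RR), IsMackey φ₁ ψ₁ →
      ∀ (φ₂ : TT ≃ₗ[ℂ] TT) (ψ₂ : RR ≃ₗ[ℂ] RR), IsMackey φ₂ ψ₂ →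
      ∀ W' : Submodule ℂ TT, (∃ k : ℤ, Ecomm W' k) →
        actOn (φ₂.trans φ₁) W' = actOn φ₁ (actOn φ₂ W')) := by
  exact stmt5'
end

section
/- For every (φ,φ̄) ∈ G(T,R), the four spaces π_U(φ(W^♯)), π_U(φ^{-1}(W^♯)), π_{W*}(φ̄(U^♯)), π_{W*}(φ̄^{-1}(U^♯)) are finite-dimensional, where U^♯ := {0} × (ℕ→ℂ) ⊆ R, and dim π_U(φ(W^♯)) − dim π_U(φ^{-1}(W^♯)) = dim π_{W*}(φ̄(U^♯)) − dim π_{W*}(φ̄^{-1}(U^♯)). -/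
open Module Submodule

/-! The corners `c = π_U ∘ φ|_{W^♯}` and `b = π_{W*} ∘ φ̄|_{U^♯}`, both maps `(ℕ → ℂ) → (ℕ →₀ ℂ)`,
are adjoint for the pairing `⟨ω, l⟩ = Σ ω(i) l(i)`, which identifies `ℕ → ℂ` with the algebraic
dual of `ℕ →₀ ℂ`. Hence the transpose of `c` is `b` followed by the injective evaluation map, so
`range b ≅ (range c)^*`. As `range b` has countable dimension and the dual of an
infinite-dimensional space has strictly larger dimension (Erdős–Kaplansky), `range c` is
finite-dimensional and `dim range b = dim range c`. Applying this to `(φ, φ̄)` and `(φ⁻¹, φ̄⁻¹)`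
identifies the two differences term by term. -/

open Cardinal LinearMap

universe u

section Adjoint

variable {K V₁ V₂ : Type u} [Field K] [AddCommGroup V₁] [Module K V₁]
  [AddCommGroup V₂] [Module K V₂]

theorem rank_range_dualMap_eq_rank_dual_range (f : V₁ →ₗ[K] V₂) :
    Module.rank K (range f.dualMap) = Module.rank K (Dual K (range f)) := by
  have hsub : range (range f).subtype.dualMap = ⊤ :=
    range_eq_top.mpr (dualMap_surjective_of_injective (range f).injective_subtype)
  have hf : f.dualMap = f.rangeRestrict.dualMap ∘ₗ (range f).subtype.dualMap := by
    rw [dualMap_comp_dualMap]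
    rfl
  rw [hf, range_comp_of_range_eq_top _ hsub]
  exact rank_range_of_injective _ (dualMap_injective_of_surjective f.surjective_rangeRestrict)

theorem rank_range_eq_rank_dual_range_of_adjoint (f : Dual K V₁ →ₗ[K] V₂)
    (g : Dual K V₂ →ₗ[K] V₁) (hfg : ∀ (ω : Dual K V₁) (ν : Dual K V₂), ν (f ω) = ω (g ν)) :
    Module.rank K (range g) = Module.rank K (Dual K (range f)) := by
  have hg : Module.Dual.eval K V₁ ∘ₗ g = f.dualMap := by
    ext ν ω
    exact (hfg ω ν).symm
  rw [← rank_range_dualMap_eq_rank_dual_range, ← hg, range_comp]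
  exact LinearEquiv.rank_eq (Submodule.equivMapOfInjective _ (eval_apply_injective K) _)

variable {f : Dual K V₁ →ₗ[K] V₂} {g : Dual K V₂ →ₗ[K] V₁}

theorem finiteDimensional_range_of_adjoint (hV₁ : Module.rank K V₁ ≤ ℵ₀)
    (hfg : ∀ (ω : Dual K V₁) (ν : Dual K V₂), ν (f ω) = ω (g ν)) :
    FiniteDimensional K (range f) := by
  by_contra hinf
  have hf : ℵ₀ ≤ Module.rank K (range f) := by
    rwa [← not_lt, Module.rank_lt_aleph0_iff]
  have := rank_lt_rank_dual hf
  rw [← rank_range_eq_rank_dual_range_of_adjoint f g hfg] at this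
  exact (this.trans_le ((Submodule.rank_le _).trans hV₁)).not_ge hf

theorem finrank_range_eq_of_adjoint [FiniteDimensional K (range f)]
    (hfg : ∀ (ω : Dual K V₁) (ν : Dual K V₂), ν (f ω) = ω (g ν)) :
    finrank K (range g) = finrank K (range f) := by
  calc finrank K (range g) = finrank K (Dual K (range f)) :=
        congrArg Cardinal.toNat (rank_range_eq_rank_dual_range_of_adjoint f g hfg)
    _ = finrank K (range f) := Subspace.dual_finrank_eq

end Adjoint

section LinearCombinationPairing

variable {K ι : Type u} [Field K]

theorem range_comp_llift_symm (c : (ι → K) →ₗ[K] (ι →₀ K)) :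
    range (c ∘ₗ (Finsupp.llift K K K ι).symm.toLinearMap) = range c :=
  range_comp_of_range_eq_top c (LinearEquiv.range _)

variable {c b : (ι → K) →ₗ[K] (ι →₀ K)}

local notation "lc" => Finsupp.linearCombination K

theorem adjoint_comp_llift_symm (hcb : ∀ ω ν : ι → K, lc ν (c ω) = lc ω (b ν))
    (ω ν : Dual K (ι →₀ K)) :
    ν ((c ∘ₗ (Finsupp.llift K K K ι).symm.toLinearMap) ω)
      = ω ((b ∘ₗ (Finsupp.llift K K K ι).symm.toLinearMap) ν) := by
  conv_lhs => rw [← (Finsupp.llift K K K ι).apply_symm_apply ν]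
  conv_rhs => rw [← (Finsupp.llift K K K ι).apply_symm_apply ω]
  exact hcb _ _

variable [Countable ι]

theorem rank_finsupp_le_aleph0 : Module.rank K (ι →₀ K) ≤ ℵ₀ := by
  rw [rank_finsupp_self, lift_id]
  exact mk_le_aleph0

theorem finiteDimensional_range_of_linearCombination_adjoint
    (hcb : ∀ ω ν : ι → K, lc ν (c ω) = lc ω (b ν)) : FiniteDimensional K (range c) := by
  rw [← range_comp_llift_symm]
  exact finiteDimensional_range_of_adjoint rank_finsupp_le_aleph0 (adjoint_comp_llift_symm hcb)

theorem finrank_range_eq_of_linearCombination_adjoint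
    (hcb : ∀ ω ν : ι → K, lc ν (c ω) = lc ω (b ν)) : finrank K (range b) = finrank K (range c) := by
  have := finiteDimensional_range_of_linearCombination_adjoint hcb
  rw [← range_comp_llift_symm] at this
  rw [← range_comp_llift_symm c, ← range_comp_llift_symm b]
  exact finrank_range_eq_of_adjoint (adjoint_comp_llift_symm hcb)

end LinearCombinationPairing

noncomputable def cornerT (φ : TT ≃ₗ[ℂ] TT) : (ℕ → ℂ) →ₗ[ℂ] (ℕ →₀ ℂ) :=
  piU ∘ₗ φ.toLinearMap ∘ₗ LinearMap.inl ℂ (ℕ → ℂ) (ℕ →₀ ℂ)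

noncomputable def cornerR (ψ : RR ≃ₗ[ℂ] RR) : (ℕ → ℂ) →ₗ[ℂ] (ℕ →₀ ℂ) :=
  piW ∘ₗ ψ.toLinearMap ∘ₗ LinearMap.inr ℂ (ℕ →₀ ℂ) (ℕ → ℂ)

theorem map_Wsharp_eq_range_cornerT (φ : TT ≃ₗ[ℂ] TT) :
    (Wsharp.map φ.toLinearMap).map piU = range (cornerT φ) := by
  rw [Wsharp, ← range_comp, ← range_comp]
  rfl

theorem map_Usharp_eq_range_cornerR (ψ : RR ≃ₗ[ℂ] RR) :
    (Usharp.map ψ.toLinearMap).map piW = range (cornerR ψ) := by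
  rw [Usharp, ← range_comp, ← range_comp]
  rfl

namespace IsMackey

variable {φ : TT ≃ₗ[ℂ] TT} {ψ : RR ≃ₗ[ℂ] RR}

theorem symm (h : IsMackey φ ψ) : IsMackey φ.symm ψ.symm := fun x y => by
  simpa using (h (φ.symm x) (ψ.symm y)).symm

theorem cornerT_adjoint (h : IsMackey φ ψ) (ω ν : ℕ → ℂ) :
    Finsupp.linearCombination ℂ ν (cornerT φ ω) = Finsupp.linearCombination ℂ ω (cornerR ψ ν) := by
  simpa [pairB, cornerT, cornerR, piU, piW] using h (ω, 0) (0, ν)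

end IsMackey

/-- The four spaces `π_U(φ(W^♯))`, `π_U(φ^{-1}(W^♯))`, `π_{W*}(φ̄(U^♯))`,
`π_{W*}(φ̄^{-1}(U^♯))` are finite-dimensional, and the two differences of dimensions agree. -/
theorem stmt7 (φ : TT ≃ₗ[ℂ] TT) (ψ : RR ≃ₗ[ℂ] RR) (h : IsMackey φ ψ) :
    FiniteDimensional ℂ ((Wsharp.map φ.toLinearMap).map piU) ∧
    FiniteDimensional ℂ ((Wsharp.map φ.symm.toLinearMap).map piU) ∧
    FiniteDimensional ℂ ((Usharp.map ψ.toLinearMap).map piW) ∧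
    FiniteDimensional ℂ ((Usharp.map ψ.symm.toLinearMap).map piW) ∧
    (Module.finrank ℂ ((Wsharp.map φ.toLinearMap).map piU) : ℤ)
        - (Module.finrank ℂ ((Wsharp.map φ.symm.toLinearMap).map piU) : ℤ)
      = (Module.finrank ℂ ((Usharp.map ψ.toLinearMap).map piW) : ℤ)
        - (Module.finrank ℂ ((Usharp.map ψ.symm.toLinearMap).map piW) : ℤ) := by
  have hadj := h.cornerT_adjoint
  have hadj' := h.symm.cornerT_adjoint
  rw [map_Wsharp_eq_range_cornerT, map_Wsharp_eq_range_cornerT, map_Usharp_eq_range_cornerR,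
    map_Usharp_eq_range_cornerR]
  refine ⟨finiteDimensional_range_of_linearCombination_adjoint hadj,
    finiteDimensional_range_of_linearCombination_adjoint hadj',
    finiteDimensional_range_of_linearCombination_adjoint fun ω ν => (hadj ν ω).symm,
    finiteDimensional_range_of_linearCombination_adjoint fun ω ν => (hadj' ν ω).symm, ?_⟩
  rw [finrank_range_eq_of_linearCombination_adjoint hadj,
    finrank_range_eq_of_linearCombination_adjoint hadj']
end
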